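/- arXiv:1410.3042 — 8 statements merged into one kernel-verified Lean document; each statement's English description precedes it below -/
import Mathlib

section
/- 𝔠 is closed under multiplication: if a, b ∈ 𝔠 then ab ∈ 𝔠. -/
/-- The set 𝔠 of compass-constructable points in the plane ℂ: the smallest set
containing 0 and 1 and closed under taking intersection points of two distinct
circles whose centers and radius-defining points are constructable. -/
inductive Compass : ℂ → Prop
  | zero : Compass 0
  | one : Compass 1
  | circle_circle (a b c d z : ℂ) :
      Compass a → Compass b → Compass c → Compass d →
      ‖z - a‖ = ‖b - a‖ →
      ‖z - c‖ = ‖d - c‖ →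
      {w : ℂ | ‖w - a‖ = ‖b - a‖} ≠
        {w : ℂ | ‖w - c‖ = ‖d - c‖} →
      Compass z

/-! Multiplication by `a ≠ 0` is a similarity of ratio `‖a‖`, so it carries each construction
step on points `c, d, e, f, z` to a valid construction step on `a c, a d, a e, a f, a z`;
induction on the construction of `b` then shows that `a b` is constructable. -/

section Similarity

variable {K : Type*} [NormedDivisionRing K] {a : K}

theorem norm_mul_sub_mul_eq_iff (ha : a ≠ 0) (w u v : K) :
    ‖a * w - a * u‖ = ‖a * v - a * u‖ ↔ ‖w - u‖ = ‖v - u‖ := by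
  rw [← mul_sub, ← mul_sub, norm_mul, norm_mul]
  exact mul_right_inj' (norm_ne_zero_iff.2 ha)

theorem preimage_mul_left_circle (ha : a ≠ 0) (u v : K) :
    (a * ·) ⁻¹' {w | ‖w - a * u‖ = ‖a * v - a * u‖} = {w | ‖w - u‖ = ‖v - u‖} := by
  ext w
  exact norm_mul_sub_mul_eq_iff ha w u v

end Similarity

theorem compass_mul (a b : ℂ) (ha : Compass a) (hb : Compass b) : Compass (a * b) := by
  rcases eq_or_ne a 0 with rfl | ha0
  · simpa using Compass.zero
  induction hb with
  | zero => simpa using Compass.zero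
  | one => simpa using ha
  | circle_circle c d e f z _ _ _ _ hzc hze hne ihc ihd ihe ihf =>
    refine Compass.circle_circle _ _ _ _ _ ihc ihd ihe ihf
      ((norm_mul_sub_mul_eq_iff ha0 z c d).2 hzc) ((norm_mul_sub_mul_eq_iff ha0 z e f).2 hze) ?_
    intro hcircles
    apply hne
    rw [← preimage_mul_left_circle ha0 c d, hcircles, preimage_mul_left_circle ha0 e f]
end

section
/- 𝔠 is closed under addition: if a, b ∈ 𝔠 then a + b ∈ 𝔠. -/
open ComplexConjugate

lemma exists_norm_sub_eq_and_norm_sub_eq_add {E : Type*} [NormedAddCommGroup E]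
    [NormedSpace ℝ E] {c c' : E} (h : c ≠ c') {r : ℝ} (hr : 0 ≤ r) :
    ∃ w : E, ‖w - c‖ = r ∧ ‖w - c'‖ = ‖c - c'‖ + r := by
  have hd : ‖c - c'‖ ≠ 0 := norm_ne_zero_iff.2 (sub_ne_zero.2 h)
  set t := r / ‖c - c'‖
  have ht : 0 ≤ t := by positivity
  refine ⟨c + t • (c - c'), ?_, ?_⟩
  · rw [add_sub_cancel_left, norm_smul, Real.norm_of_nonneg ht, div_mul_cancel₀ _ hd]
  · rw [show c + t • (c - c') - c' = (1 + t) • (c - c') by module, norm_smul,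
      Real.norm_of_nonneg (by positivity), add_mul, one_mul, div_mul_cancel₀ _ hd]

lemma setOf_norm_sub_eq_ne_of_ne {E : Type*} [NormedAddCommGroup E] [NormedSpace ℝ E]
    {c₁ c₂ : E} {r₁ r₂ : ℝ} (h : c₁ ≠ c₂) (hr₁ : 0 ≤ r₁) :
    {w : E | ‖w - c₁‖ = r₁} ≠ {w | ‖w - c₂‖ = r₂} := by
  intro heq
  obtain ⟨w₁, hw₁, hw₁'⟩ := exists_norm_sub_eq_and_norm_sub_eq_add h hr₁
  have hr₂ : r₂ = ‖c₁ - c₂‖ + r₁ := ((Set.ext_iff.1 heq w₁).1 hw₁).symm.trans hw₁'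
  obtain ⟨w₂, hw₂, hw₂'⟩ := exists_norm_sub_eq_and_norm_sub_eq_add h.symm (r := r₂)
    (by rw [hr₂]; positivity)
  have hr₁' : r₁ = ‖c₂ - c₁‖ + r₂ := ((Set.ext_iff.1 heq w₂).2 hw₂).symm.trans hw₂'
  rw [norm_sub_rev] at hr₁'
  linarith [norm_pos_iff.2 (sub_ne_zero.2 h)]

noncomputable def ω : ℂ := ⟨1 / 2, √3 / 2⟩

lemma conj_ω : conj ω = 1 - ω := by
  apply Complex.ext <;> simp [ω]; norm_num

lemma norm_ω : ‖ω‖ = 1 := by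
  rw [Complex.norm_def, Real.sqrt_eq_one, Complex.normSq_apply]
  simp only [ω]
  nlinarith [Real.mul_self_sqrt (show (0 : ℝ) ≤ 3 by norm_num)]

lemma norm_ω_sub_one : ‖ω - 1‖ = 1 := by
  rw [← norm_neg, neg_sub, ← conj_ω, Complex.norm_conj, norm_ω]

lemma ω_ne_conj : ω ≠ conj ω := by
  intro h
  have him := congrArg Complex.im h
  simp only [ω, Complex.conj_im] at him
  linarith [Real.sqrt_pos.2 (show (0 : ℝ) < 3 by norm_num)]

/-- The reflection in the perpendicular bisector of `0` and `a` (for `a ≠ 0`). -/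
noncomputable def perpBisectorReflection (a z : ℂ) : ℂ := a - a * conj (z / a)

lemma isometry_perpBisectorReflection {a : ℂ} (ha : a ≠ 0) :
    Isometry (perpBisectorReflection a) := by
  refine Isometry.of_dist_eq fun z w => ?_
  rw [dist_eq_norm, dist_eq_norm, perpBisectorReflection, perpBisectorReflection,
    show a - a * conj (z / a) - (a - a * conj (w / a)) = -(a * conj ((z - w) / a)) by
      rw [sub_div, map_sub]; ring,
    norm_neg, norm_mul, Complex.norm_conj, norm_div, mul_div_cancel₀ _ (norm_ne_zero_iff.2 ha)]

lemma perpBisectorReflection_zero (a : ℂ) : perpBisectorReflection a 0 = a := by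
  simp [perpBisectorReflection]

lemma perpBisectorReflection_mul {a u : ℂ} (ha : a ≠ 0) (hu : conj u = 1 - u) :
    perpBisectorReflection a (a * u) = a * u := by
  rw [perpBisectorReflection, mul_div_cancel_left₀ _ ha, hu]
  ring

lemma norm_perpBisectorReflection_sub {a : ℂ} (ha : a ≠ 0) (z : ℂ) :
    ‖perpBisectorReflection a z - a‖ = ‖z‖ := by
  calc ‖perpBisectorReflection a z - a‖
      = dist (perpBisectorReflection a z) (perpBisectorReflection a 0) := by
        rw [perpBisectorReflection_zero, dist_eq_norm]
    _ = ‖z‖ := by rw [(isometry_perpBisectorReflection ha).dist_eq, dist_zero_right]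

namespace Compass

lemma of_mem_circles {a b c d z : ℂ} (ha : Compass a) (hb : Compass b) (hc : Compass c)
    (hd : Compass d) (hac : a ≠ c) (hz₁ : ‖z - a‖ = ‖b - a‖) (hz₂ : ‖z - c‖ = ‖d - c‖) :
    Compass z :=
  circle_circle a b c d z ha hb hc hd hz₁ hz₂ (setOf_norm_sub_eq_ne_of_ne hac (norm_nonneg _))

lemma map_of_isometry {σ : ℂ → ℂ} (hσ : Isometry σ) {p q z : ℂ} (hp : Compass p)
    (hq : Compass q) (hpq : p ≠ q) (hσp : σ p = p) (hσq : σ q = q) (hz : Compass z) :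
    Compass (σ z) := by
  have hdist : ∀ {x}, σ x = x → ‖σ z - x‖ = ‖z - x‖ := fun {x} hx => by
    rw [← dist_eq_norm, ← dist_eq_norm, ← hσ.dist_eq z x, hx]
  exact of_mem_circles hp hz hq hz hpq (hdist hσp) (hdist hσq)

lemma mul_of_norm_eq_one {a u : ℂ} (ha : Compass a) (hu : ‖u‖ = 1) (hu₁ : ‖u - 1‖ = 1) :
    Compass (a * u) := by
  rcases eq_or_ne a 0 with rfl | ha₀
  · simpa using zero
  refine of_mem_circles zero ha ha zero ha₀.symm ?_ ?_
  · simp [hu]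
  · rw [← mul_sub_one, norm_mul, hu₁, mul_one, zero_sub, norm_neg]

lemma mul_ω {a : ℂ} (ha : Compass a) : Compass (a * ω) :=
  mul_of_norm_eq_one ha norm_ω norm_ω_sub_one

lemma mul_conj_ω {a : ℂ} (ha : Compass a) : Compass (a * conj ω) :=
  mul_of_norm_eq_one ha (by rw [Complex.norm_conj, norm_ω])
    (by rw [← map_one (starRingEnd ℂ), ← map_sub, Complex.norm_conj, norm_ω_sub_one])

lemma perpBisectorReflection {a z : ℂ} (ha₀ : a ≠ 0) (ha : Compass a) (hz : Compass z) :
    Compass (perpBisectorReflection a z) :=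
  map_of_isometry (isometry_perpBisectorReflection ha₀)
    (mul_ω ha) (mul_conj_ω ha)
    (fun h => ω_ne_conj (mul_left_cancel₀ ha₀ h))
    (perpBisectorReflection_mul ha₀ conj_ω)
    (perpBisectorReflection_mul ha₀ (by rw [Complex.conj_conj, conj_ω, sub_sub_cancel]))
    hz

lemma add_of_ne {a b : ℂ} (ha : Compass a) (hb : Compass b) (hab : a ≠ b) : Compass (a + b) := by
  rcases eq_or_ne a 0 with rfl | ha₀
  · simpa using hb
  rcases eq_or_ne b 0 with rfl | hb₀
  · simpa using ha
  refine of_mem_circles ha (perpBisectorReflection ha₀ ha hb) hb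
    (perpBisectorReflection hb₀ hb ha) hab ?_ ?_
  · rw [norm_perpBisectorReflection_sub ha₀, add_sub_cancel_left]
  · rw [norm_perpBisectorReflection_sub hb₀, add_sub_cancel_right]

lemma two_mul {a : ℂ} (ha : Compass a) : Compass (2 * a) := by
  rcases eq_or_ne a 0 with rfl | ha₀
  · simpa using zero
  have hω₀ : ω ≠ 0 := fun h => by simpa [h] using norm_ω
  have hω₁ : ω ≠ 1 := fun h => by simpa [h] using norm_ω_sub_one
  have h_ne₁ : a ≠ a * ω := fun h => hω₁ ((mul_eq_left₀ ha₀).1 h.symm)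
  have h_ne₂ : a + a * ω ≠ a * conj ω := fun h => by
    rw [conj_ω] at h
    exact mul_ne_zero ha₀ hω₀ (by linear_combination h / 2)
  convert add_of_ne (add_of_ne ha (mul_ω ha) h_ne₁) (mul_conj_ω ha) h_ne₂ using 1
  rw [conj_ω]
  ring

end Compass

theorem compass_add (a b : ℂ) (ha : Compass a) (hb : Compass b) : Compass (a + b) := by
  rcases eq_or_ne a b with rfl | hab
  · simpa [two_mul] using ha.two_mul
  · exact ha.add_of_ne hb hab
end

section
/- The points 3/2 and 1/2 belong to 𝔠; in particular the midpoint of the segment with endpoints 0 and 1 is compass-constructable. -/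
/-!
The unit circles about 0 and 1 meet at ω = (1 + i√3)/2 and its conjugate; the circle about ω
through ω̄ (radius √3) meets the circle about 1 through 0 at 2. The unit circle about 0 and the
circle about 2 through 0 meet at p = (1 + i√15)/4 and p̄, and the circles about p and p̄ through 0
meet again at the mirror image 1/2 of 0 in the line Re w = 1/4. Finally ‖p - 1/2‖ = 1, so the
circle about 1/2 through p meets the circle about 1 through 1/2 at 3/2.
-/

open Metric

theorem sphere_ne_sphere_of_center_ne {E : Type*} [NormedAddCommGroup E] [NormedSpace ℝ E]
    {a c : E} {r s : ℝ} (hr : 0 ≤ r) (hac : a ≠ c) : sphere a r ≠ sphere c s := by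
  intro h
  set d := ‖a - c‖
  have hd : 0 < d := norm_pos_iff.mpr (sub_ne_zero.mpr hac)
  set u := d⁻¹ • (a - c)
  have hu : ‖u‖ = 1 := by rw [norm_smul, norm_inv, norm_norm, inv_mul_cancel₀ hd.ne']
  have hac' : a - c = d • u := by simp [u, smul_smul, hd.ne']
  -- `a + r • u` lies at distance `d + r` from `c`, and `c - s • u` at distance `d + s` from `a`.
  have hs : s = d + r := by
    have : a + r • u ∈ sphere c s := h ▸ by simp [norm_smul, hu, abs_of_nonneg hr]
    rw [mem_sphere_iff_norm, show a + r • u - c = (d + r) • u by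
      rw [add_sub_right_comm, hac', add_smul], norm_smul, hu, mul_one,
      Real.norm_of_nonneg (by positivity)] at this
    exact this.symm
  have : c - s • u ∈ sphere a r :=
    h.symm ▸ by simp [norm_smul, hu, hs, abs_of_nonneg (by positivity : 0 ≤ d + r)]
  rw [mem_sphere_iff_norm, show c - s • u - a = -((d + s) • u) by
    rw [add_smul, ← hac']; abel, norm_neg, norm_smul, hu, mul_one,
    Real.norm_of_nonneg (by linarith)] at this
  linarith

theorem setOf_norm_sub_eq {E : Type*} [SeminormedAddCommGroup E] (a : E) (r : ℝ) :
    {w | ‖w - a‖ = r} = sphere a r := by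
  ext
  simp [mem_sphere_iff_norm]

theorem norm_sub_eq_norm_sub_of_re_im {z w z' w' : ℂ}
    (h : (z.re - w.re) ^ 2 + (z.im - w.im) ^ 2 = (z'.re - w'.re) ^ 2 + (z'.im - w'.im) ^ 2) :
    ‖z - w‖ = ‖z' - w'‖ := by
  rw [← dist_eq_norm, ← dist_eq_norm, Complex.dist_eq_re_im, Complex.dist_eq_re_im, h]

namespace Compass

theorem of_norm_sub_eq {a b c d z : ℂ} (ha : Compass a) (hb : Compass b) (hc : Compass c)
    (hd : Compass d) (hac : a ≠ c) (hza : ‖z - a‖ = ‖b - a‖) (hzc : ‖z - c‖ = ‖d - c‖) :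
    Compass z :=
  circle_circle a b c d z ha hb hc hd hza hzc <| by
    simpa only [setOf_norm_sub_eq] using sphere_ne_sphere_of_center_ne (norm_nonneg _) hac

theorem conj {z : ℂ} (hz : Compass z) : Compass (starRingEnd ℂ z) := by
  induction hz with
  | zero => simpa using zero
  | one => simpa using one
  | circle_circle a b c d z _ _ _ _ hza hzc hne iha ihb ihc ihd =>
    refine circle_circle _ _ _ _ _ iha ihb ihc ihd ?_ ?_ fun h ↦ hne ?_
    · simpa [← map_sub] using hza
    · simpa [← map_sub] using hzc
    · ext w
      simpa [← map_sub] using Set.ext_iff.mp h (starRingEnd ℂ w)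

theorem mk_one_half_sqrt_three_div_two : Compass ⟨1 / 2, √3 / 2⟩ :=
  of_norm_sub_eq zero one one zero zero_ne_one
    (norm_sub_eq_norm_sub_of_re_im (by norm_num [div_pow]))
    (norm_sub_eq_norm_sub_of_re_im (by norm_num [div_pow]))

theorem two : Compass 2 :=
  of_norm_sub_eq one zero mk_one_half_sqrt_three_div_two mk_one_half_sqrt_three_div_two.conj
    (by simp [Complex.ext_iff])
    (norm_sub_eq_norm_sub_of_re_im (by norm_num))
    (norm_sub_eq_norm_sub_of_re_im (by norm_num; ring_nf; norm_num))

theorem mk_one_quarter_sqrt_fifteen_div_four : Compass ⟨1 / 4, √15 / 4⟩ :=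
  of_norm_sub_eq zero one two zero two_ne_zero.symm
    (norm_sub_eq_norm_sub_of_re_im (by norm_num [div_pow]))
    (norm_sub_eq_norm_sub_of_re_im (by norm_num [div_pow]))

theorem one_half : Compass (1 / 2) :=
  of_norm_sub_eq mk_one_quarter_sqrt_fifteen_div_four zero
    mk_one_quarter_sqrt_fifteen_div_four.conj zero
    (by simp [Complex.ext_iff, CharZero.eq_neg_self_iff])
    (norm_sub_eq_norm_sub_of_re_im (by norm_num [div_pow]))
    (norm_sub_eq_norm_sub_of_re_im (by norm_num [div_pow]))

theorem three_halves : Compass (3 / 2) :=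
  of_norm_sub_eq one one_half one_half mk_one_quarter_sqrt_fifteen_div_four (by norm_num)
    (norm_sub_eq_norm_sub_of_re_im (by norm_num))
    (norm_sub_eq_norm_sub_of_re_im (by norm_num [div_pow]))

end Compass

/-- 3/2 and 1/2 are compass-constructable; in particular the midpoint of the
segment with endpoints 0 and 1 is compass-constructable. -/
theorem three_halves_and_one_half_constructable :
    Compass (3 / 2) ∧ Compass (1 / 2) :=
  ⟨Compass.three_halves, Compass.one_half⟩
end

section
/- Let O, P ∈ ℂ, let r > 0 with dist(O, P) > r, and suppose M and N are two distinct points each lying on the circle of center O and radius r and on the circle with diameter OP (i.e. |M − O| = r, dist(M, midpoint(O,P)) = dist(O,P)/2, and similarly for N). Then the inversion of P in the circle of center O and radius r equals the orthogonal projection of O onto line MN. -/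
/-!
By Thales, a point `X` on the circle with diameter `OP` sees `OP` at a right angle, so
`⟪X - O, P - O⟫ = |X - O|² = r²` when `X` also lies on the circle of radius `r`. This is the
equation of the polar of `P`: the line through the inversion `P'` of `P` perpendicular to `OP`.
In the plane, the polar is the line `MN`, and the foot of the perpendicular from `O` to it is `P'`.
-/

open EuclideanGeometry RealInnerProductSpace

namespace EuclideanGeometry

variable {V P : Type*} [NormedAddCommGroup V] [InnerProductSpace ℝ V] [MetricSpace P]
  [NormedAddTorsor V P]

lemma inner_vsub_vsub_eq_dist_sq_of_mem_ofDiameter {p₁ p₂ x : P}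
    (hx : x ∈ Sphere.ofDiameter p₁ p₂) : ⟪x -ᵥ p₁, p₂ -ᵥ p₁⟫ = dist x p₁ ^ 2 := by
  have hright : ⟪p₁ -ᵥ x, p₂ -ᵥ x⟫ = 0 := by
    rw [InnerProductGeometry.inner_eq_zero_iff_angle_eq_pi_div_two]
    exact Sphere.angle_eq_pi_div_two_iff_mem_sphere_ofDiameter.2 hx
  rw [← vsub_add_vsub_cancel p₂ x p₁, inner_add_right, real_inner_self_eq_norm_sq,
    ← dist_eq_norm_vsub, ← neg_vsub_eq_vsub_rev p₁ x, inner_neg_left, hright, neg_zero, zero_add]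

namespace Sphere

lemma mem_orthRadius_inversion_iff {s : Sphere P} {x y : P} (hR : s.radius ≠ 0)
    (hx : x ≠ s.center) :
    y ∈ s.orthRadius (inversion s.center s.radius x) ↔
      ⟪y -ᵥ s.center, x -ᵥ s.center⟫ = s.radius ^ 2 := by
  have hd : dist x s.center ≠ 0 := dist_ne_zero.2 hx
  have hk : (s.radius / dist x s.center) ^ 2 ≠ 0 := pow_ne_zero _ (div_ne_zero hR hd)
  rw [mem_orthRadius_iff_inner_left, ← vsub_sub_vsub_cancel_right y _ s.center,
    inversion_vsub_center, inner_smul_right, inner_sub_left, inner_smul_left,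
    real_inner_self_eq_norm_sq, ← dist_eq_norm_vsub, mul_eq_zero, or_iff_right hk, sub_eq_zero]
  simp only [RCLike.conj_to_real]
  field_simp

lemma mem_orthRadius_inversion_of_mem_of_mem_ofDiameter {s : Sphere P} {x y : P}
    (hR : s.radius ≠ 0) (hx : x ≠ s.center) (hy : y ∈ s) (hy' : y ∈ Sphere.ofDiameter s.center x) :
    y ∈ s.orthRadius (inversion s.center s.radius x) := by
  rw [mem_orthRadius_inversion_iff hR hx, inner_vsub_vsub_eq_dist_sq_of_mem_ofDiameter hy',
    mem_sphere.1 hy]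

lemma affineSpan_pair_eq_orthRadius (hV : Module.finrank ℝ V = 2) {s : Sphere P} {p q₁ q₂ : P}
    (hp : p ≠ s.center) (hq₁ : q₁ ∈ s.orthRadius p) (hq₂ : q₂ ∈ s.orthRadius p) (hq : q₁ ≠ q₂) :
    line[ℝ, q₁, q₂] = s.orthRadius p := by
  have : FiniteDimensional ℝ V := .of_finrank_eq_succ hV
  have hle := affineSpan_pair_le_of_mem_of_mem hq₁ hq₂
  refine AffineSubspace.eq_of_direction_eq_of_nonempty_of_le ?_
    ⟨q₁, left_mem_affineSpan_pair _ _ _⟩ hle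
  refine Submodule.eq_of_le_of_finrank_eq (AffineSubspace.direction_le hle) ?_
  have := finrank_orthRadius hp
  rw [direction_affineSpan, vectorSpan_pair, finrank_span_singleton (vsub_ne_zero.2 hq)]
  omega

end Sphere

end EuclideanGeometry

/-- If M and N are the two intersection points of the circle Ω of center O and
radius r with the circle on diameter OP (P exterior to Ω), then the inversion of
P in Ω is the foot of the perpendicular from O to line MN. -/
theorem inversion_eq_proj_onto_chord (O P : ℂ) (r : ℝ) (hr : 0 < r)
    (hP : r < dist O P) (M N : ℂ) (hMN : M ≠ N)
    (hM₁ : ‖M - O‖ = r)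
    (hM₂ : dist M (midpoint ℝ O P) = dist O P / 2)
    (hN₁ : ‖N - O‖ = r)
    (hN₂ : dist N (midpoint ℝ O P) = dist O P / 2) :
    EuclideanGeometry.inversion O r P =
      EuclideanGeometry.orthogonalProjection (affineSpan ℝ ({M, N} : Set ℂ)) O := by
  set s : Sphere ℂ := ⟨O, r⟩
  have hPO : P ≠ O := (dist_pos.1 (hr.trans hP)).symm
  have hQO : inversion O r P ≠ O := (inversion_eq_center hr.ne').not.2 hPO
  have mem_polar (X : ℂ) (h₁ : ‖X - O‖ = r) (h₂ : dist X (midpoint ℝ O P) = dist O P / 2) :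
      X ∈ s.orthRadius (inversion O r P) :=
    Sphere.mem_orthRadius_inversion_of_mem_of_mem_ofDiameter hr.ne' hPO
      (mem_sphere.2 (by rwa [dist_eq_norm])) (mem_sphere.2 h₂)
  have hline : line[ℝ, M, N] = s.orthRadius (inversion O r P) :=
    Sphere.affineSpan_pair_eq_orthRadius Complex.finrank_real_complex hQO
      (mem_polar M hM₁ hM₂) (mem_polar N hN₁ hN₂) hMN
  simp only [hline]
  exact (s.orthogonalProjection_orthRadius_center _).symm
end

section
/- Let A, B, P ∈ ℂ with A ≠ B and P not on line AB, let r > 0, let N be the orthogonal projection of P onto line AB, and let I = inversion P r N. Then the image of line AB under the inversion z ↦ inversion P r z equals the circle with diameter PI with the point P removed: {inversion P r X : X ∈ line AB} = {Y ∈ ℂ : dist(Y, midpoint(P,I)) = dist(P,I)/2} \ {P}. -/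
/-!
A line not through `P` is the perpendicular bisector of `P` and its reflection `Q`, and inversion
centred at `P` maps that bisector to the sphere through `P` centred at the image of `Q`, punctured
at `P`. As `Q` is the image of the foot `N` under the homothety of ratio `2` about `P`, and
inversion about `P` turns a homothety of ratio `t` into one of ratio `t⁻¹`, this centre is the
midpoint of `P` and `I`.
-/

open EuclideanGeometry

namespace EuclideanGeometry

open AffineMap AffineSubspace Module

variable {V P : Type*} [NormedAddCommGroup V] [InnerProductSpace ℝ V] [MetricSpace P]
  [NormedAddTorsor V P]

theorem inversion_homothety (c : P) (R t : ℝ) (x : P) :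
    inversion c R (homothety c t x) = homothety c t⁻¹ (inversion c R x) := by
  rcases eq_or_ne t 0 with rfl | ht
  · simp
  rcases eq_or_ne x c with rfl | hx
  · simp
  simp only [inversion, homothety_apply, dist_eq_norm_vsub V, vadd_vsub, norm_smul,
    Real.norm_eq_abs, smul_smul]
  congr 1
  have : ‖x -ᵥ c‖ ≠ 0 := by simpa using hx
  simp only [div_pow, mul_pow, sq_abs]
  field_simp

theorem reflection_eq_homothety_orthogonalProjection (s : AffineSubspace ℝ P) [Nonempty s]
    [s.direction.HasOrthogonalProjection] (p : P) :
    reflection s p = homothety p (2 : ℝ) (orthogonalProjection s p : P) := by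
  rw [reflection_apply', homothety_apply, two_smul ℝ, add_vadd, vsub_vadd]

theorem finrank_direction_affineSpan_pair {A B : P} (hAB : A ≠ B) :
    finrank ℝ (affineSpan ℝ ({A, B} : Set P)).direction = 1 := by
  rw [direction_affineSpan, vectorSpan_pair, finrank_span_singleton (vsub_ne_zero.2 hAB)]

theorem eq_perpBisector_reflection [FiniteDimensional ℝ V] {s : AffineSubspace ℝ P} [Nonempty s]
    (hs : finrank ℝ s.direction + 1 = finrank ℝ V) {p : P} (hp : p ∉ s) :
    s = perpBisector p (reflection s p) := by
  have hle : s ≤ perpBisector p (reflection s p) := fun x hx ↦ by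
    rw [mem_perpBisector_iff_dist_eq, dist_reflection_eq_of_mem s hx]
  refine eq_of_direction_eq_of_nonempty_of_le ?_ (Set.nonempty_coe_sort.1 ‹_›) hle
  have hQ : reflection s p -ᵥ p ≠ 0 := by rwa [vsub_ne_zero, Ne, reflection_eq_self_iff]
  refine Submodule.eq_of_le_of_finrank_eq (direction_le hle) ?_
  rw [direction_perpBisector]
  exact (Submodule.finrank_add_finrank_orthogonal' (by rw [finrank_span_singleton hQ]; omega)).symm

end EuclideanGeometry

/-- The image of the line AB under inversion in a circle centered at a point P
not on the line is the circle with diameter P I, with the point P removed, where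
I is the inversion of the foot of the perpendicular from P to AB. -/
theorem inversion_image_of_line (A B P : ℂ) (hAB : A ≠ B)
    (hP : P ∉ affineSpan ℝ ({A, B} : Set ℂ)) (r : ℝ) (hr : 0 < r)
    (N I : ℂ)
    (hN : N = EuclideanGeometry.orthogonalProjection (affineSpan ℝ ({A, B} : Set ℂ)) P)
    (hI : I = EuclideanGeometry.inversion P r N) :
    (fun X => EuclideanGeometry.inversion P r X) ''
        (affineSpan ℝ ({A, B} : Set ℂ) : Set ℂ) =
      {Y : ℂ | dist Y (midpoint ℝ P I) = dist P I / 2} \ {P} := by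
  set L := affineSpan ℝ ({A, B} : Set ℂ)
  have hL : L = AffineSubspace.perpBisector P (reflection L P) := eq_perpBisector_reflection
    (by rw [finrank_direction_affineSpan_pair hAB, Complex.finrank_real_complex]) hP
  have hQP : reflection L P ≠ P := by rwa [Ne, reflection_eq_self_iff]
  have hcenter : inversion P r (reflection L P) = midpoint ℝ P I := by
    rw [reflection_eq_homothety_orthogonalProjection, inversion_homothety, ← hN, ← hI,
      AffineMap.homothety_eq_lineMap, midpoint, invOf_eq_inv]
  rw [hL, image_inversion_perpBisector hr.ne' hQP, ← dist_inversion_center, hcenter,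
    dist_midpoint_left, Real.norm_two, inv_mul_eq_div]
  rfl
end

section
/- Let O, A, B ∈ ℂ with A ≠ B and O not on line AB, let r > 0, let H be the orthogonal projection of O onto line AB (so H ≠ O), and let K = inversion O r H. Then the intersection of line AB with the circle of center O and radius r equals the intersection of that circle with the circle of diameter OK: {X ∈ ℂ : X ∈ line AB and |X − O| = r} = {X ∈ ℂ : |X − O| = r and dist(X, midpoint(O,K)) = dist(O,K)/2}. -/
/-!
For `X` on the circle of center `O` and radius `r`, the relation
`K - O = (r / |H - O|)² (H - O)` gives `⟪O - X, K - X⟫ = (r / |H - O|)² ⟪X - H, O - H⟫`.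
By Thales the left side vanishes iff `X` lies on the circle of diameter `OK`, and the right
side vanishes iff `X` lies on `AB`, the line through `H` perpendicular to `OH`.
-/

open EuclideanGeometry Module

open scoped RealInnerProductSpace

section

variable {V P : Type*} [NormedAddCommGroup V] [InnerProductSpace ℝ V] [MetricSpace P]
  [NormedAddTorsor V P]

theorem inner_vsub_vsub_eq_zero_iff_dist_midpoint_eq_half_dist (p₁ p₂ p₃ : P) :
    ⟪p₁ -ᵥ p₂, p₃ -ᵥ p₂⟫ = 0 ↔ dist p₂ (midpoint ℝ p₁ p₃) = dist p₁ p₃ / 2 := by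
  rw [InnerProductGeometry.inner_eq_zero_iff_angle_eq_pi_div_two, ← angle,
    Sphere.angle_eq_pi_div_two_iff_mem_sphere_ofDiameter]
  rfl

theorem inner_vsub_vsub_inversion_of_dist_eq {O H X : P} {r : ℝ} (hX : dist X O = r)
    (hH : H ≠ O) :
    ⟪O -ᵥ X, inversion O r H -ᵥ X⟫ = (r / dist H O) ^ 2 * ⟪X -ᵥ H, O -ᵥ H⟫ := by
  have hw : ‖H -ᵥ O‖ ≠ 0 := by rwa [← dist_eq_norm_vsub, dist_ne_zero]
  rw [← vsub_sub_vsub_cancel_right (inversion O r H) X O, inversion_vsub_center,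
    ← vsub_sub_vsub_cancel_right X H O, ← neg_vsub_eq_vsub_rev X O, ← neg_vsub_eq_vsub_rev H O,
    ← hX, dist_eq_norm_vsub V, dist_eq_norm_vsub V]
  simp only [inner_neg_left, inner_neg_right, inner_sub_right,
    real_inner_smul_right, real_inner_self_eq_norm_sq, real_inner_comm (H -ᵥ O)]
  field_simp
  ring

theorem AffineSubspace.mem_iff_inner_vsub_eq_zero_of_finrank_add_one_eq [FiniteDimensional ℝ V]
    {s : AffineSubspace ℝ P} (hs : finrank ℝ s.direction + 1 = finrank ℝ V) {p H : P}
    (hp : p ∉ s) (hH : H ∈ s) (hpH : p -ᵥ H ∈ s.directionᗮ) (X : P) :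
    X ∈ s ↔ ⟪X -ᵥ H, p -ᵥ H⟫ = 0 := by
  have hv : p -ᵥ H ≠ 0 := fun h => hp (vsub_eq_zero_iff_eq.1 h ▸ hH)
  have hdir : s.direction = (ℝ ∙ (p -ᵥ H))ᗮ := by
    refine Submodule.eq_of_le_of_finrank_eq ?_ ?_
    · rwa [Submodule.le_orthogonal_iff_le_orthogonal, Submodule.span_singleton_le_iff_mem]
    · have := Submodule.finrank_add_finrank_orthogonal (𝕜 := ℝ) (ℝ ∙ (p -ᵥ H))
      rw [finrank_span_singleton hv] at this
      omega
  rw [← vsub_right_mem_direction_iff_mem hH X, hdir,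
    Submodule.mem_orthogonal_singleton_iff_inner_left]

end

/-- For a line AB not through the center O of the circle Ω of radius r, with H
the foot of the perpendicular from O to AB and K the inversion of H in Ω, the
intersection of AB with Ω equals the intersection of Ω with the circle of
diameter OK. -/
theorem line_circle_inter_eq_circle_circle_inter (O A B : ℂ) (hAB : A ≠ B)
    (hO : O ∉ affineSpan ℝ ({A, B} : Set ℂ)) (r : ℝ) (hr : 0 < r)
    (H K : ℂ)
    (hH : H = EuclideanGeometry.orthogonalProjection (affineSpan ℝ ({A, B} : Set ℂ)) O)
    (hK : K = EuclideanGeometry.inversion O r H) :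
    {X : ℂ | X ∈ affineSpan ℝ ({A, B} : Set ℂ) ∧ ‖X - O‖ = r} =
      {X : ℂ | ‖X - O‖ = r ∧
        dist X (midpoint ℝ O K) = dist O K / 2} := by
  have hline : finrank ℝ (affineSpan ℝ ({A, B} : Set ℂ)).direction + 1 = finrank ℝ ℂ := by
    rw [direction_affineSpan, vectorSpan_pair, finrank_span_singleton (vsub_ne_zero.2 hAB),
      Complex.finrank_real_complex]
  have hHs : H ∈ affineSpan ℝ ({A, B} : Set ℂ) := hH ▸ orthogonalProjection_mem O
  have hOH : O -ᵥ H ∈ (affineSpan ℝ ({A, B} : Set ℂ)).directionᗮ :=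
    hH ▸ vsub_orthogonalProjection_mem_direction_orthogonal _ O
  have hHO : H ≠ O := fun h => hO (h ▸ hHs)
  ext X
  rw [Set.mem_ofPred_eq, Set.mem_ofPred_eq, and_comm, ← dist_eq_norm]
  refine and_congr_right fun hX => ?_
  rw [AffineSubspace.mem_iff_inner_vsub_eq_zero_of_finrank_add_one_eq hline hO hHs hOH,
    ← inner_vsub_vsub_eq_zero_iff_dist_midpoint_eq_half_dist, hK,
    inner_vsub_vsub_inversion_of_dist_eq hX hHO, mul_eq_zero_iff_left]
  exact pow_ne_zero 2 (div_ne_zero hr.ne' (dist_ne_zero.2 hHO))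
end

section
/- Let O, A ∈ ℂ with O ≠ A, let C ∈ ℂ with C not on line OA, set r = |C − O| (so r > 0), P = 2C − O, Q = 3C − 2O, let H be the orthogonal projection of Q onto line OA, and let I = inversion Q (2r) H. If X ∈ ℂ satisfies dist(X, midpoint(C,P)) = dist(C,P)/2 and dist(X, midpoint(Q,I)) = dist(Q,I)/2 (i.e. X lies on the circle with diameter CP and on the circle with diameter QI), then the point Y = inversion Q (2r) X lies on line OA and satisfies |Y − O| = r; that is, inverting the common points of these two circles in the circle of center Q and radius 2r yields intersection points of line OA with the circle of center O and radius r. -/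
/-!
Inversion in the circle of center `Q` and radius `2r` exchanges the two circles of the
construction with the line `OA` and the circle `Ω` of center `O` and radius `r`.
The circle with diameter `QI` passes through `Q` and has center `M` with `inversion M = 2H - Q`,
the reflection of `Q` in `OA`; so it is sent to the perpendicular bisector of `Q` and `2H - Q`,
which in the plane is `OA` itself. A sphere not through the center of inversion is sent to a
sphere; here `C` is fixed and `P` is the image of the point of `Ω` opposite to `C`, so the circle
with diameter `CP` is sent to `Ω`.
-/

open EuclideanGeometry AffineMap AffineSubspace Module

namespace EuclideanGeometry

variable {V P : Type*} [NormedAddCommGroup V] [InnerProductSpace ℝ V] [MetricSpace P]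
  [NormedAddTorsor V P]

theorem inversion_midpoint_center_inversion {c x : P} {R : ℝ} (hR : R ≠ 0) (hx : x ≠ c) :
    inversion c R (midpoint ℝ c (inversion c R x)) = Equiv.pointReflection x c := by
  have hd : dist x c ≠ 0 := dist_ne_zero.2 hx
  apply vsub_left_cancel (p := c)
  rw [inversion_vsub_center, dist_midpoint_left, midpoint_vsub_left,
    dist_center_inversion, inversion_vsub_center, Equiv.pointReflection_apply, vadd_vsub_assoc,
    dist_comm c x, smul_smul, smul_smul, ← two_smul ℝ (x -ᵥ c)]
  congr 1
  simp only [Real.norm_ofNat, invOf_eq_inv]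
  field_simp

theorem perpBisector_reflection_eq [FiniteDimensional ℝ V] {s : AffineSubspace ℝ P} [Nonempty s]
    [s.direction.HasOrthogonalProjection] (hs : finrank ℝ s.direction + 1 = finrank ℝ V) {p : P}
    (hp : p ∉ s) : perpBisector p (reflection s p) = s := by
  have hle : s ≤ perpBisector p (reflection s p) := fun q hq ↦
    mem_perpBisector_iff_dist_eq.2 (dist_reflection_eq_of_mem s hq p).symm
  have hv : reflection s p -ᵥ p ≠ 0 := vsub_ne_zero.2 fun h ↦ hp ((reflection_eq_self_iff p).1 h)
  refine (eq_of_direction_eq_of_nonempty_of_le ?_ ⟨_, (Classical.arbitrary s).2⟩ hle).symm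
  refine Submodule.eq_of_le_of_finrank_eq (direction_le hle) ?_
  have := (ℝ ∙ (reflection s p -ᵥ p)).finrank_add_finrank_orthogonal
  rw [finrank_span_singleton hv] at this
  rw [direction_perpBisector]
  omega

theorem dist_inversion_lineMap_of_dist_eq {c z x : P} {R ρ : ℝ}
    (hρ : dist z c ^ 2 ≠ ρ ^ 2) (hx : dist x z = ρ) :
    dist (inversion c R x) (lineMap c z (R ^ 2 / (dist z c ^ 2 - ρ ^ 2))) =
      |R ^ 2 / (dist z c ^ 2 - ρ ^ 2)| * ρ := by
  have hk : dist z c ^ 2 - ρ ^ 2 ≠ 0 := sub_ne_zero.2 hρ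
  have hxc : dist x c ≠ 0 := by
    rintro h
    rw [dist_eq_zero.1 h, dist_comm] at hx
    exact hρ (by rw [hx])
  have hρ0 : 0 ≤ ρ := hx ▸ dist_nonneg
  have hpol : 2 * inner ℝ (x -ᵥ c) (z -ᵥ c) = dist x c ^ 2 + dist z c ^ 2 - ρ ^ 2 := by
    rw [← hx, dist_eq_norm_vsub V, dist_eq_norm_vsub V, dist_eq_norm_vsub V,
      ← vsub_sub_vsub_cancel_right x z c, norm_sub_sq_real]
    ring
  rw [← sq_eq_sq₀ dist_nonneg (by positivity), dist_eq_norm_vsub V, inversion_def, lineMap_apply,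
    vadd_vsub_vadd_cancel_right, norm_sub_sq_real, norm_smul, norm_smul, inner_smul_left,
    inner_smul_right, ← dist_eq_norm_vsub, ← dist_eq_norm_vsub]
  simp only [Real.norm_eq_abs, RCLike.conj_to_real, mul_pow, sq_abs, div_pow]
  field_simp
  linear_combination (-R ^ 4 * (dist z c ^ 2 - ρ ^ 2)) * hpol

theorem inversion_mem_of_dist_midpoint_inversion_orthogonalProjection [FiniteDimensional ℝ V]
    {s : AffineSubspace ℝ P} [Nonempty s] [s.direction.HasOrthogonalProjection]
    (hs : finrank ℝ s.direction + 1 = finrank ℝ V) {p x : P} {R : ℝ} (hp : p ∉ s) (hR : R ≠ 0)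
    (hx : x ≠ p)
    (h : dist x (midpoint ℝ p (inversion p R (orthogonalProjection s p))) =
      dist p (inversion p R (orthogonalProjection s p)) / 2) :
    inversion p R x ∈ s := by
  set I := inversion p R (orthogonalProjection s p)
  have hproj : (orthogonalProjection s p : P) ≠ p := fun h ↦ hp (h ▸ orthogonalProjection_mem p)
  have hI : midpoint ℝ p I ≠ p := by
    rw [ne_eq, midpoint_eq_left_iff, center_eq_inversion hR]
    exact hproj
  have hsphere : dist x (midpoint ℝ p I) = dist (midpoint ℝ p I) p := by
    rw [h, dist_midpoint_left, Real.norm_ofNat, inv_mul_eq_div]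
  have hbisector := (inversion_mem_perpBisector_inversion_iff hR hx hI).2 hsphere
  rwa [inversion_midpoint_center_inversion hR hproj, Equiv.pointReflection_apply,
    ← reflection_apply', perpBisector_reflection_eq hs hp] at hbisector

end EuclideanGeometry

theorem Complex.midpoint_eq (a b : ℂ) : midpoint ℝ a b = (a + b) / 2 := by
  rw [midpoint_eq_smul_add, invOf_eq_inv, Complex.real_smul]
  push_cast
  ring

theorem Complex.dist_inversion_eq_of_dist_midpoint {O C X : ℂ} (hCO : C ≠ O)
    (hX : dist X (midpoint ℝ C (2 * C - O)) = dist C (2 * C - O) / 2) :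
    dist (inversion (3 * C - 2 * O) (2 * ‖C - O‖) X) O = ‖C - O‖ := by
  have hr : 0 < ‖C - O‖ := norm_pos_iff.2 (sub_ne_zero.2 hCO)
  have hCP : dist C (2 * C - O) = ‖C - O‖ := by
    rw [Complex.dist_eq, ← norm_neg]
    ring_nf
  have hMQ : dist (midpoint ℝ C (2 * C - O)) (3 * C - 2 * O) = 3 / 2 * ‖C - O‖ := by
    rw [Complex.midpoint_eq, Complex.dist_eq,
      show (C + (2 * C - O)) / 2 - (3 * C - 2 * O) = -((3 / 2 : ℝ) * (C - O)) by push_cast; ring,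
      norm_neg, norm_mul, Complex.norm_real]
    norm_num
  have hk : (2 * ‖C - O‖) ^ 2 /
      (dist (midpoint ℝ C (2 * C - O)) (3 * C - 2 * O) ^ 2 - (dist C (2 * C - O) / 2) ^ 2) = 2 := by
    rw [hMQ, hCP]
    field_simp
    ring
  have hcenter : lineMap (3 * C - 2 * O) (midpoint ℝ C (2 * C - O)) (2 : ℝ) = O := by
    rw [lineMap_apply_module', two_smul, Complex.midpoint_eq]
    ring
  have hdist := dist_inversion_lineMap_of_dist_eq (R := 2 * ‖C - O‖)
    (by rw [hMQ, hCP]; nlinarith) hX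
  rw [hk, hcenter, hCP, abs_two] at hdist
  linarith

/-- Construction of the intersection of a line OA with the circle Ω of center O
through C in the case where the center O lies on the line: with r = |C − O|,
P = 2C − O, Q = 3C − 2O, H the foot of the perpendicular from Q to line OA and
I the inversion of H in the circle Λ of center Q and radius 2r, inverting any
common point X of the circles with diameters CP and QI in Λ yields a point of
line OA lying on Ω. -/
theorem line_through_center_circle_inter (O A C : ℂ) (hOA : O ≠ A)
    (hC : C ∉ affineSpan ℝ ({O, A} : Set ℂ))
    (r : ℝ) (hr : r = ‖C - O‖)
    (P Q : ℂ) (hP : P = 2 * C - O) (hQ : Q = 3 * C - 2 * O)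
    (H I : ℂ)
    (hH : H = EuclideanGeometry.orthogonalProjection (affineSpan ℝ ({O, A} : Set ℂ)) Q)
    (hI : I = EuclideanGeometry.inversion Q (2 * r) H)
    (X : ℂ)
    (hX₁ : dist X (midpoint ℝ C P) = dist C P / 2)
    (hX₂ : dist X (midpoint ℝ Q I) = dist Q I / 2)
    (Y : ℂ) (hY : Y = EuclideanGeometry.inversion Q (2 * r) X) :
    Y ∈ affineSpan ℝ ({O, A} : Set ℂ) ∧ ‖Y - O‖ = r := by
  subst hr hP hQ hY hH hI
  set S := affineSpan ℝ ({O, A} : Set ℂ)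
  have hO : O ∈ S := mem_affineSpan ℝ (by simp)
  have hCO : C ≠ O := fun h ↦ hC (h ▸ hO)
  have hR : 2 * ‖C - O‖ ≠ 0 := mul_ne_zero two_ne_zero (norm_ne_zero_iff.2 (sub_ne_zero.2 hCO))
  have hQS : 3 * C - 2 * O ∉ S := fun hQS ↦ hC <| by
    convert lineMap_mem (1 / 3 : ℝ) hO hQS using 1
    rw [lineMap_apply_module', Complex.real_smul]
    push_cast
    ring
  have hdim : finrank ℝ S.direction + 1 = finrank ℝ ℂ := by
    rw [direction_affineSpan, vectorSpan_pair, finrank_span_singleton (vsub_ne_zero.2 hOA),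
      Complex.finrank_real_complex]
  have hYO := Complex.dist_inversion_eq_of_dist_midpoint hCO hX₁
  have hXQ : X ≠ 3 * C - 2 * O := by
    rintro rfl
    rw [inversion_self, Complex.dist_eq,
      show 3 * C - 2 * O - O = (3 : ℝ) * (C - O) by push_cast; ring, norm_mul, Complex.norm_real,
      Real.norm_ofNat] at hYO
    exact hCO (sub_eq_zero.1 (norm_eq_zero.1 (by linarith)))
  exact ⟨inversion_mem_of_dist_midpoint_inversion_orthogonalProjection hdim hQS hR hXQ hX₂,
    by rwa [← Complex.dist_eq]⟩
end

section
/- (Mohr–Mascheroni) Every point constructable with ruler and compass is constructable with compass alone: ℛ = 𝔠. -/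
/-- The set ℛ of ruler-and-compass constructable points in the plane ℂ: the
smallest set containing 0 and 1 and closed under intersecting two distinct
lines through constructable points, intersecting such a line with a circle
whose center and a point of which are constructable, and intersecting two
distinct circles whose centers and radius-defining points are constructable. -/
inductive RulerCompass : ℂ → Prop
  | zero : RulerCompass 0
  | one : RulerCompass 1
  | line_line (A B C D z : ℂ) :
      RulerCompass A → RulerCompass B → RulerCompass C → RulerCompass D →
      A ≠ B → C ≠ D →
      affineSpan ℝ ({A, B} : Set ℂ) ≠ affineSpan ℝ ({C, D} : Set ℂ) →
      z ∈ affineSpan ℝ ({A, B} : Set ℂ) →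
      z ∈ affineSpan ℝ ({C, D} : Set ℂ) →
      RulerCompass z
  | line_circle (A B C D z : ℂ) :
      RulerCompass A → RulerCompass B → RulerCompass C → RulerCompass D →
      A ≠ B →
      z ∈ affineSpan ℝ ({A, B} : Set ℂ) →
      ‖z - C‖ = ‖D - C‖ →
      RulerCompass z
  | circle_circle (a b c d z : ℂ) :
      RulerCompass a → RulerCompass b → RulerCompass c → RulerCompass d →
      ‖z - a‖ = ‖b - a‖ →
      ‖z - c‖ = ‖d - c‖ →
      {w : ℂ | ‖w - a‖ = ‖b - a‖} ≠
        {w : ℂ | ‖w - c‖ = ‖d - c‖} →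
      RulerCompass z

open Complex ComplexConjugate

/-- `a ± x` lie on both spheres, so the parallelogram law gives `‖a - c‖² + r² = s²`, and
symmetrically `‖a - c‖² + s² = r²`. -/
theorem eq_of_sphere_eq {E : Type*} [NormedAddCommGroup E] [InnerProductSpace ℝ E]
    [Nontrivial E] {a c : E} {r s : ℝ} (hr : 0 ≤ r) (hs : 0 ≤ s)
    (h : Metric.sphere a r = Metric.sphere c s) : a = c := by
  obtain ⟨x, rfl⟩ := exists_norm_eq E hr
  obtain ⟨y, rfl⟩ := exists_norm_eq E hs
  have on_second : ∀ w, ‖w - a‖ = ‖x‖ → ‖w - c‖ = ‖y‖ := fun w hw ↦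
    mem_sphere_iff_norm.mp (h ▸ mem_sphere_iff_norm.mpr hw)
  have on_first : ∀ w, ‖w - c‖ = ‖y‖ → ‖w - a‖ = ‖x‖ := fun w hw ↦
    mem_sphere_iff_norm.mp (h ▸ mem_sphere_iff_norm.mpr hw)
  have h₁ := on_second (a + x) (by simp)
  have h₂ := on_second (a - x) (by simp)
  have h₃ := on_first (c + y) (by simp)
  have h₄ := on_first (c - y) (by simp)
  rw [add_sub_right_comm] at h₁ h₃
  rw [sub_right_comm] at h₂ h₄
  have hac := parallelogram_law_with_norm ℝ (a - c) x
  have hca := parallelogram_law_with_norm ℝ (c - a) y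
  rw [h₁, h₂, norm_sub_rev a c] at hac
  rw [h₃, h₄] at hca
  have : ‖c - a‖ = 0 := by nlinarith [norm_nonneg (c - a)]
  exact (sub_eq_zero.mp (norm_eq_zero.mp this)).symm

noncomputable def sixthRoot : ℂ := (1 + √3 * I) / 2

theorem sixthRoot_sq : sixthRoot ^ 2 = sixthRoot - 1 := by
  have h3 : ((√3 : ℝ) : ℂ) ^ 2 = 3 := by norm_cast; simp
  unfold sixthRoot
  linear_combination (I ^ 2 / 4) * h3 + (3 / 4) * I_sq

theorem sixthRoot_pow_three : sixthRoot ^ 3 = -1 := by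
  linear_combination (sixthRoot + 1) * sixthRoot_sq

theorem norm_sixthRoot : ‖sixthRoot‖ = 1 := by
  rw [← pow_eq_one_iff_of_nonneg (norm_nonneg _) three_ne_zero, ← norm_pow,
    sixthRoot_pow_three, norm_neg, norm_one]

theorem norm_sixthRoot_sub_one : ‖sixthRoot - 1‖ = 1 := by
  rw [← sixthRoot_sq, norm_pow, norm_sixthRoot, one_pow]

namespace Compass

theorem circle_circle_of_ne {a b c d z : ℂ} (ha : Compass a) (hb : Compass b)
    (hc : Compass c) (hd : Compass d) (hac : a ≠ c) (h₁ : ‖z - a‖ = ‖b - a‖)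
    (h₂ : ‖z - c‖ = ‖d - c‖) : Compass z := by
  refine circle_circle a b c d z ha hb hc hd h₁ h₂ fun h ↦ hac ?_
  refine eq_of_sphere_eq (norm_nonneg (b - a)) (norm_nonneg (d - c)) ?_
  ext w
  simpa [mem_sphere_iff_norm] using Set.ext_iff.mp h w

theorem map_conj {z : ℂ} (hz : Compass z) : Compass (conj z) := by
  refine circle_circle_of_ne zero hz one hz zero_ne_one ?_ ?_
  · simp
  · simpa using norm_conj (z - 1)

theorem rotate {c p : ℂ} (hc : Compass c) (hp : Compass p) :
    Compass (c + (p - c) * sixthRoot) := by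
  rcases eq_or_ne c p with rfl | hcp
  · simpa using hc
  refine circle_circle_of_ne hc hp hp hc hcp ?_ ?_
  · simp [norm_sixthRoot]
  · rw [show c + (p - c) * sixthRoot - p = (p - c) * (sixthRoot - 1) by ring, norm_mul,
      norm_sixthRoot_sub_one, mul_one, norm_sub_rev]

/-- Three rotations by `π / 3` about `c` make the point reflection in `c`. -/
theorem two_mul_sub {c p : ℂ} (hc : Compass c) (hp : Compass p) : Compass (2 * c - p) := by
  convert rotate hc (rotate hc (rotate hc hp)) using 1
  linear_combination (c - p) * sixthRoot_pow_three

/-- Inversion of `u` in the circle about `c` through `p`: the circle about `u` through `c` cuts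
that circle in two points, and the circles about these through `c` meet again at the image. -/
theorem inversion {c p u : ℂ} (hc : Compass c) (hp : Compass p) (hu : Compass u)
    (h : ‖p - c‖ < 2 * ‖u - c‖) :
    Compass (c + (u - c) * ((‖p - c‖ / ‖u - c‖) ^ 2 : ℝ)) := by
  set ρ := ‖p - c‖ / ‖u - c‖ with hρ
  have huc : 0 < ‖u - c‖ := by linarith [norm_nonneg (p - c)]
  rcases (norm_nonneg (p - c)).eq_or_lt with hpc | hpc
  · simpa [hρ, ← hpc] using hc
  have hρ0 : 0 < ρ := div_pos hpc huc
  have hρ2 : ρ < 2 := (div_lt_iff₀ huc).mpr (by linarith)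
  have on_circles : ∀ μ : ℂ, ‖μ‖ = ρ → ‖μ - 1‖ = 1 → Compass (c + (u - c) * μ) := by
    intro μ hμ hμ1
    refine circle_circle_of_ne hc hp hu hc (sub_ne_zero.mp (norm_pos_iff.mp huc)).symm ?_ ?_
    · rw [add_sub_cancel_left, norm_mul, hμ, hρ, mul_div_cancel₀ _ huc.ne']
    · rw [show c + (u - c) * μ - u = (u - c) * (μ - 1) by ring, norm_mul, hμ1, mul_one,
        norm_sub_rev]
  set y := ρ * √(1 - ρ ^ 2 / 4)
  have hy : 0 < y := mul_pos hρ0 (Real.sqrt_pos.mpr (by nlinarith))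
  have hy2 : y ^ 2 = ρ ^ 2 - ρ ^ 4 / 4 := by
    rw [mul_pow, Real.sq_sqrt (by nlinarith)]; ring
  set ν : ℂ := ((ρ ^ 2 / 2 : ℝ) : ℂ) + y * I
  have hν : ‖ν‖ = ρ := by
    rw [norm_add_mul_I, show (ρ ^ 2 / 2) ^ 2 + y ^ 2 = ρ ^ 2 by rw [hy2]; ring,
      Real.sqrt_sq hρ0.le]
  have hν1 : ‖ν - 1‖ = 1 := by
    rw [show ν - 1 = ((ρ ^ 2 / 2 - 1 : ℝ) : ℂ) + y * I by simp only [ν]; push_cast; ring,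
      norm_add_mul_I, show (ρ ^ 2 / 2 - 1) ^ 2 + y ^ 2 = 1 by rw [hy2]; ring, Real.sqrt_one]
  have hconj : conj ν = ((ρ ^ 2 / 2 : ℝ) : ℂ) - y * I := by
    rw [map_add, map_mul, conj_ofReal, conj_ofReal, conj_I]; ring
  have hsum : ((ρ ^ 2 : ℝ) : ℂ) = ν + conj ν := by rw [hconj]; simp only [ν]; push_cast; ring
  have hP := on_circles ν hν hν1
  have hQ := on_circles (conj ν) (by rwa [norm_conj]) (by simpa using (norm_conj (ν - 1)).trans hν1)
  refine circle_circle_of_ne hP hc hQ hc ?_ ?_ ?_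
  · intro hPQ
    have : (u - c) * ((2 * y : ℝ) * I) = 0 := by
      rw [hconj] at hPQ; push_cast; linear_combination hPQ
    simp [sub_eq_zero, hy.ne', (sub_ne_zero.mp (norm_pos_iff.mp huc))] at this
  · rw [hsum, show c + (u - c) * (ν + conj ν) - (c + (u - c) * ν) = (u - c) * conj ν by ring,
      show c - (c + (u - c) * ν) = (u - c) * -ν by ring, norm_mul, norm_mul, norm_neg, norm_conj]
  · rw [hsum, show c + (u - c) * (ν + conj ν) - (c + (u - c) * conj ν) = (u - c) * ν by ring,
      show c - (c + (u - c) * conj ν) = (u - c) * -conj ν by ring, norm_mul, norm_mul, norm_neg,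
      norm_conj]

theorem add_div_two {a b : ℂ} (ha : Compass a) (hb : Compass b) : Compass ((a + b) / 2) := by
  rcases eq_or_ne a b with rfl | hab
  · simpa [add_self_div_two] using ha
  have hba : 0 < ‖b - a‖ := norm_pos_iff.mpr (sub_ne_zero.mpr hab.symm)
  have hdist : ‖2 * b - a - a‖ = 2 * ‖b - a‖ := by
    rw [show 2 * b - a - a = 2 * (b - a) by ring, norm_mul, Complex.norm_two]
  convert inversion ha hb (two_mul_sub hb ha) (by rw [hdist]; linarith) using 1
  rw [hdist, div_mul_cancel_right₀ hba.ne']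
  push_cast
  ring

theorem neg {z : ℂ} (hz : Compass z) : Compass (-z) := by
  simpa using two_mul_sub zero hz

theorem add {x y : ℂ} (hx : Compass x) (hy : Compass y) : Compass (x + y) := by
  simpa [mul_div_cancel₀] using two_mul_sub (add_div_two hx hy) zero

theorem sub {x y : ℂ} (hx : Compass x) (hy : Compass y) : Compass (x - y) := by
  simpa [sub_eq_add_neg] using add hx (neg hy)

theorem two_pow_mul {z : ℂ} (hz : Compass z) (k : ℕ) : Compass (2 ^ k * z) := by
  induction k with
  | zero => simpa using hz
  | succ k ih => convert two_mul_sub ih zero using 1; ring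

/-- After doubling `z` until it lies outside the circle of radius `1 / 2`, invert in the unit
circle and reflect in the real axis. -/
theorem inv {z : ℂ} (hz : Compass z) : Compass z⁻¹ := by
  rcases eq_or_ne z 0 with rfl | hz0
  · simpa using zero
  obtain ⟨k, hk⟩ := pow_unbounded_of_one_lt ‖z‖⁻¹ one_lt_two
  have hu : ‖(1 : ℂ) - 0‖ < 2 * ‖2 ^ k * z - 0‖ := by
    have : 1 < 2 ^ k * ‖z‖ := (inv_lt_iff_one_lt_mul₀ (norm_pos_iff.mpr hz0)).mp hk
    simp only [sub_zero, norm_one, norm_mul, norm_pow, Complex.norm_two]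
    linarith
  have hinv : Compass (2 ^ k * z)⁻¹ := by
    convert map_conj (inversion zero one (two_pow_mul hz k) hu) using 1
    generalize 2 ^ k * z = u
    rw [Complex.inv_def, ← Complex.sq_norm]
    simp
  convert two_pow_mul hinv k using 1
  field_simp

theorem sq {z : ℂ} (hz : Compass z) : Compass (z ^ 2) := by
  rcases eq_or_ne z 0 with rfl | hz0
  · simpa using zero
  rcases eq_or_ne z 1 with rfl | hz1
  · simpa using one
  have hz1' : z - 1 ≠ 0 := sub_ne_zero.mpr hz1
  have key : z ^ 2 = ((z - 1)⁻¹ - z⁻¹)⁻¹ + z := by field_simp; ring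
  rw [key]
  exact add (inv (sub (inv (sub hz one)) (inv hz))) hz

theorem mul {x y : ℂ} (hx : Compass x) (hy : Compass y) : Compass (x * y) := by
  have key : x * y = ((x + y) ^ 2 - x ^ 2 - y ^ 2 + 0) / 2 := by ring
  rw [key]
  exact add_div_two (sub (sub (sq (add hx hy)) (sq hx)) (sq hy)) zero

def subfield : Subfield ℂ where
  carrier := {z | Compass z}
  mul_mem' := mul
  one_mem' := one
  add_mem' := add
  zero_mem' := zero
  neg_mem' := neg
  inv_mem' _ := inv

/-- `i √r` lies on the circles with diameters `[-1, r]` and `[-r, 1]`. -/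
theorem sqrt_mul_I {r : ℝ} (hr : Compass r) (hr0 : 0 ≤ r) (hr1 : r ≠ 1) :
    Compass (√r * I) := by
  have hr' : (r : ℂ) ∈ subfield := hr
  have hsq : √r ^ 2 = r := Real.sq_sqrt hr0
  have hc₁ : ((r - 1) / 2 : ℂ) ∈ subfield :=
    div_mem (sub_mem hr' (one_mem _)) (ofNat_mem _ 2)
  have hc₂ : ((1 - r) / 2 : ℂ) ∈ subfield :=
    div_mem (sub_mem (one_mem _) hr') (ofNat_mem _ 2)
  refine circle_circle_of_ne hc₁ (neg one) hc₂ one ?_ ?_ ?_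
  · intro h
    apply hr1
    exact_mod_cast (by linear_combination h : (r : ℂ) = 1)
  all_goals
    simp only [norm_def, normSq_apply, sub_re, sub_im, mul_re, mul_im, ofReal_re, ofReal_im, I_re,
      I_im, neg_re, neg_im, one_re, one_im, div_ofNat_re, div_ofNat_im]
    congr 1
    linear_combination hsq

theorem sqrt {r : ℝ} (hr : Compass r) (hr0 : 0 ≤ r) : Compass (√r : ℂ) := by
  rcases eq_or_ne r 1 with rfl | hr1
  · simpa using one
  have h4 : Compass ((4 : ℝ) : ℂ) := by exact_mod_cast ofNat_mem subfield 4
  have hsqrt4 : √(4 : ℝ) = 2 := by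
    rw [show (4 : ℝ) = 2 ^ 2 by norm_num, Real.sqrt_sq zero_le_two]
  have h2I := sqrt_mul_I h4 (by norm_num) (by norm_num)
  rw [hsqrt4] at h2I
  rw [show (√r : ℂ) = -(√r * I * ((2 : ℝ) * I)) / 2 by
    push_cast; linear_combination (√r : ℂ) * I_sq]
  exact div_mem (neg_mem (mul_mem (sqrt_mul_I hr hr0 hr1) h2I)) (ofNat_mem subfield 2)

theorem rulerCompass {z : ℂ} (hz : Compass z) : RulerCompass z := by
  induction hz with
  | zero => exact RulerCompass.zero
  | one => exact RulerCompass.one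
  | circle_circle a b c d z _ _ _ _ h₁ h₂ hne ha hb hc hd =>
    exact RulerCompass.circle_circle a b c d z ha hb hc hd h₁ h₂ hne

end Compass

theorem affineSpan_pair_eq_of_sub_eq_smul {k V : Type*} [Field k] [AddCommGroup V] [Module k V]
    {A B C D z : V} {r : k} (hr : r ≠ 0) (h : D - C = r • (B - A)) (h₁ : z ∈ line[k, A, B])
    (h₂ : z ∈ line[k, C, D]) : line[k, A, B] = line[k, C, D] := by
  refine AffineSubspace.ext_of_direction_eq ?_ ⟨z, h₁, h₂⟩
  rw [direction_affineSpan, direction_affineSpan, vectorSpan_pair, vectorSpan_pair, vsub_eq_sub,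
    vsub_eq_sub, show C - D = r • (A - B) by rw [← neg_sub D, h, ← smul_neg, neg_sub],
    Submodule.span_singleton_smul_eq (isUnit_iff_ne_zero.mpr hr)]

theorem exists_eq_add_ofReal_mul_of_mem_line {A B z : ℂ} (h : z ∈ line[ℝ, A, B]) :
    ∃ t : ℝ, z = A + t * (B - A) := by
  obtain ⟨t, rfl⟩ := mem_affineSpan_pair_iff_exists_lineMap_eq.mp h
  exact ⟨t, by rw [AffineMap.lineMap_apply_module', real_smul, add_comm]⟩

section ConjClosedSubfield

variable {K : Subfield ℂ}

theorem ofReal_re_mem (hconj : ∀ z ∈ K, conj z ∈ K) {z : ℂ} (hz : z ∈ K) : (z.re : ℂ) ∈ K := by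
  rw [re_eq_add_conj]
  exact div_mem (add_mem hz (hconj z hz)) (ofNat_mem K 2)

theorem ofReal_normSq_mem (hconj : ∀ z ∈ K, conj z ∈ K) {z : ℂ} (hz : z ∈ K) :
    (normSq z : ℂ) ∈ K := by
  rw [← mul_conj]
  exact mul_mem hz (hconj z hz)

theorem ofReal_mem_of_sq_mem (hsqrt : ∀ r : ℝ, (r : ℂ) ∈ K → 0 ≤ r → (√r : ℂ) ∈ K) {x : ℝ}
    (hx : ((x ^ 2 : ℝ) : ℂ) ∈ K) : (x : ℂ) ∈ K := by
  have habs := hsqrt _ hx (sq_nonneg x)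
  rw [Real.sqrt_sq_eq_abs] at habs
  rcases abs_choice x with h | h
  · rwa [h] at habs
  · rw [h, ofReal_neg] at habs
    simpa using neg_mem habs

/-- The parameter `t` of `z = A + t (B - A)` solves `t (U - conj U) = W - conj W`, which
determines it unless `U = (B - A) conj (D - C)` is real, i.e. the lines are parallel. -/
theorem mem_of_mem_inter_lines (hconj : ∀ z ∈ K, conj z ∈ K) {A B C D z : ℂ} (hA : A ∈ K)
    (hB : B ∈ K) (hC : C ∈ K) (hD : D ∈ K) (hAB : A ≠ B) (hCD : C ≠ D)
    (hne : line[ℝ, A, B] ≠ line[ℝ, C, D]) (h₁ : z ∈ line[ℝ, A, B]) (h₂ : z ∈ line[ℝ, C, D]) :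
    z ∈ K := by
  obtain ⟨t, rfl⟩ := exists_eq_add_ofReal_mul_of_mem_line h₁
  obtain ⟨s, hs⟩ := exists_eq_add_ofReal_mul_of_mem_line h₂
  set u := B - A
  set v := D - C
  set U := u * conj v
  set W := (C - A) * conj v
  have hW : W = t * U - s * (v * conj v) := by linear_combination (-conj v) * hs
  have key : (t : ℂ) * (U - conj U) = W - conj W := by
    have hW' := congrArg conj hW
    simp only [map_sub, map_mul, conj_ofReal, conj_conj] at hW'
    linear_combination hW' - hW
  have hU : U - conj U ≠ 0 := by
    intro hU
    have hUc : conj U = U := (sub_eq_zero.mp hU).symm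
    have hu : u * conj u ≠ 0 := by
      have hu0 : u ≠ 0 := sub_ne_zero.mpr hAB.symm
      exact mul_ne_zero hu0 ((map_ne_zero _).mpr hu0)
    have hv : v = (U.re / normSq u : ℝ) • u := by
      rw [real_smul, ofReal_div, conj_eq_iff_re.mp hUc, ← mul_conj, div_mul_eq_mul_div,
        eq_div_iff hu]
      calc v * (u * conj u) = u * conj U := by simp only [U, map_mul, conj_conj]; ring
        _ = U * u := by rw [hUc, mul_comm]
    refine hne (affineSpan_pair_eq_of_sub_eq_smul ?_ hv h₁ h₂)
    rintro h0
    rw [h0, zero_smul] at hv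
    exact sub_ne_zero.mpr hCD.symm hv
  have hU' : U ∈ K := mul_mem (sub_mem hB hA) (hconj _ (sub_mem hD hC))
  have hW' : W ∈ K := mul_mem (sub_mem hC hA) (hconj _ (sub_mem hD hC))
  have ht : (t : ℂ) ∈ K := by
    rw [eq_div_of_mul_eq hU key]
    exact div_mem (sub_mem hW' (hconj _ hW')) (sub_mem hU' (hconj _ hU'))
  exact add_mem hA (mul_mem ht (sub_mem hB hA))

/-- The parameter `t` of `z = A + t (B - A)` solves a real quadratic `α t² + 2 β t + γ = 0`
with coefficients in `K`, so `α t + β = ±√(β² - α γ)`. -/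
theorem mem_of_mem_line_of_norm_sub_eq (hconj : ∀ z ∈ K, conj z ∈ K)
    (hsqrt : ∀ r : ℝ, (r : ℂ) ∈ K → 0 ≤ r → (√r : ℂ) ∈ K) {A B C D z : ℂ} (hA : A ∈ K)
    (hB : B ∈ K) (hC : C ∈ K) (hD : D ∈ K) (hAB : A ≠ B) (h₁ : z ∈ line[ℝ, A, B])
    (h₂ : ‖z - C‖ = ‖D - C‖) : z ∈ K := by
  obtain ⟨t, rfl⟩ := exists_eq_add_ofReal_mul_of_mem_line h₁
  set u := B - A
  set v := A - C
  set α := normSq u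
  set β := (u * conj v).re
  set γ := normSq v - normSq (D - C)
  have hquad : α * t ^ 2 + 2 * β * t + γ = 0 := by
    have h := congrArg (· ^ 2) h₂
    simp only [Complex.sq_norm, show A + t * u - C = t * u + v by ring, normSq_add, normSq_mul,
      normSq_ofReal, mul_assoc, re_ofReal_mul] at h
    linear_combination h
  have hα : (α : ℂ) ∈ K := ofReal_normSq_mem hconj (sub_mem hB hA)
  have hβ : (β : ℂ) ∈ K := ofReal_re_mem hconj (mul_mem (sub_mem hB hA) (hconj _ (sub_mem hA hC)))
  have hγ : (γ : ℂ) ∈ K := by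
    rw [show (γ : ℂ) = normSq v - normSq (D - C) from ofReal_sub _ _]
    exact sub_mem (ofReal_normSq_mem hconj (sub_mem hA hC))
      (ofReal_normSq_mem hconj (sub_mem hD hC))
  have hroot : ((α * t + β : ℝ) : ℂ) ∈ K := by
    refine ofReal_mem_of_sq_mem hsqrt ?_
    rw [show (α * t + β) ^ 2 = β ^ 2 - α * γ by linear_combination α * hquad]
    push_cast
    exact sub_mem (pow_mem hβ 2) (mul_mem hα hγ)
  have hα0 : (α : ℂ) ≠ 0 := ofReal_ne_zero.mpr (normSq_eq_zero.not.mpr (sub_ne_zero.mpr hAB.symm))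
  have ht : (t : ℂ) ∈ K := by
    rw [show (t : ℂ) = ((α * t + β : ℝ) - β) / α by field_simp; push_cast; ring]
    exact div_mem (sub_mem hroot hβ) hα
  exact add_mem hA (mul_mem ht (sub_mem hB hA))

end ConjClosedSubfield

/-- Mohr–Mascheroni: every point constructable with ruler and compass is
constructable with compass alone. -/
theorem mohr_mascheroni :
    {z : ℂ | RulerCompass z} = {z : ℂ | Compass z} := by
  ext z
  refine ⟨fun hz ↦ ?_, Compass.rulerCompass⟩
  induction hz with
  | zero => exact Compass.zero
  | one => exact Compass.one
  | line_line A B C D z _ _ _ _ hAB hCD hne h₁ h₂ hA hB hC hD =>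
    exact mem_of_mem_inter_lines (K := Compass.subfield) (fun _ ↦ Compass.map_conj)
      hA hB hC hD hAB hCD hne h₁ h₂
  | line_circle A B C D z _ _ _ _ hAB h₁ h₂ hA hB hC hD =>
    exact mem_of_mem_line_of_norm_sub_eq (K := Compass.subfield) (fun _ ↦ Compass.map_conj)
      (fun _ ↦ Compass.sqrt) hA hB hC hD hAB h₁ h₂
  | circle_circle a b c d z _ _ _ _ h₁ h₂ hne ha hb hc hd =>
    exact Compass.circle_circle a b c d z ha hb hc hd h₁ h₂ hne
end
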